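/- arXiv:1711.09317 — 3 statements merged into one kernel-verified Lean document; each statement's English description precedes it below -/
import Mathlib

section
/- For every x ∈ [0,1], the point c(x) = (x, x², x³, ((x−γ₁)₊)³, ..., ((x−γ_K)₊)³) lies in the convex hull of the K+4 points {v₁, ..., v_{K+4}}. -/
/-- The curve `c(x) = (x, x², x³, ((x−γ₁)₊)³, …, ((x−γ_K)₊)³)` in `ℝ^{K+3}`. -/
noncomputable def pyrCurve (K : ℕ) (γ : Fin K → ℝ) (x : ℝ) : Fin (K + 3) → ℝ :=
  fun i =>
    if h0 : i.val = 0 then x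
    else if h1 : i.val = 1 then x ^ 2
    else if h2 : i.val = 2 then x ^ 3
    else (max (x - γ ⟨i.val - 3, by have := i.isLt; omega⟩) 0) ^ 3

/-- The `K+4` vertices `v₁, …, v_{K+4}` of the enclosing polytope in `ℝ^{K+3}`
(here `0`-indexed: `pyrVert K γ p` is `v_{p+1}`). -/
noncomputable def pyrVert (K : ℕ) (γ : Fin K → ℝ) (p : Fin (K + 4)) : Fin (K + 3) → ℝ :=
  fun i =>
    if hp0 : p.val = 0 then 0
    else if hp1 : p.val = 1 then
      if i.val = 0 then 1 / 2 else 0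
    else if hp2 : p.val = 2 then
      if i.val = 0 then 2 / 3 else if i.val = 1 then 1 / 3 else 0
    else if hpl : p.val = K + 3 then
      if hi : i.val ≤ 2 then 1
      else (1 - γ ⟨i.val - 3, by have := i.isLt; omega⟩) ^ 3
    else
      let k : Fin K := ⟨p.val - 3, by have := p.isLt; omega⟩
      if hi0 : i.val = 0 then (2 + γ k) / 3
      else if hi1 : i.val = 1 then (1 + 2 * γ k) / 3
      else if hi2 : i.val = 2 then γ k
      else
        let j : Fin K := ⟨i.val - 3, by have := i.isLt; omega⟩
        if j.val < k.val then (γ k - γ j) * (1 - γ j) ^ 2 else 0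

/-!
Fix `x ∈ [0, 1]` and put `h(t) = ((x - t)₊)³ / (1 - t)²`. The vertices `v₃, …, v_{K+4}` are the
values of the linear spline `u(t) = ((2 + t)/3, (1 + 2t)/3, t, ((t - γ_j)₊ (1 - γ_j)²)_j)` at the
knots `0 = g₀ < g₁ < ⋯ < g_{K+1} = 1`. Let `D₀ = h'(0) = 2x³ - 3x²`, let `D_{k+1}` be the slope of
`h` on `[g_k, g_{k+1}]`, and `D_{K+2} = 0`. Weighting `v₁, v₂` by `(1 - x)², 2x(1 - x)²` and
`u(g_k)` by `D_{k+1} - D_k`, summation by parts turns the ramp `(t - g_j)₊` into `h(g_j)`, and the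
combination is exactly `c(x)`. The weights are nonnegative because
`h(t) = sup_{μ ≥ 0} (3μ²(x - t) - 2μ³(1 - t))` is convex on `t ≤ 1`, with tangent of slope `D₀`
at `0`.
-/

open Finset Set

section Knots

variable {K : ℕ} {γ : Fin K → ℝ}

noncomputable def knot (K : ℕ) (γ : Fin K → ℝ) (j : ℕ) : ℝ :=
  if h0 : j = 0 then 0 else if hK : j ≤ K then γ ⟨j - 1, by omega⟩ else 1

@[simp] lemma knot_zero : knot K γ 0 = 0 := rfl

lemma knot_succ (k : Fin K) : knot K γ (k + 1) = γ k := by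
  simp [knot, Nat.succ_le_of_lt k.isLt]

lemma knot_of_lt {j : ℕ} (hj : K < j) : knot K γ j = 1 := by
  simp [knot, show j ≠ 0 by omega, show ¬j ≤ K by omega]

lemma knot_lt_knot_succ (hγ0 : ∀ k, 0 < γ k) (hγ1 : ∀ k, γ k < 1) (hγ : StrictMono γ)
    {k : ℕ} (hk : k ≤ K) : knot K γ k < knot K γ (k + 1) := by
  unfold knot
  split_ifs <;>
    first
    | contradiction
    | exact hγ0 _
    | exact hγ1 _
    | exact zero_lt_one
    | exact hγ (Fin.mk_lt_mk.2 (by omega))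

lemma knot_monotone (hγ0 : ∀ k, 0 < γ k) (hγ1 : ∀ k, γ k < 1) (hγ : StrictMono γ) :
    Monotone (knot K γ) := by
  refine monotone_nat_of_le_succ fun k => ?_
  rcases le_or_gt k K with hk | hk
  · exact (knot_lt_knot_succ hγ0 hγ1 hγ hk).le
  · rw [knot_of_lt hk, knot_of_lt (by omega)]

lemma knot_nonneg (hγ0 : ∀ k, 0 < γ k) (hγ1 : ∀ k, γ k < 1) (hγ : StrictMono γ) (k : ℕ) :
    0 ≤ knot K γ k :=
  knot_zero (γ := γ) ▸ knot_monotone hγ0 hγ1 hγ k.zero_le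

lemma knot_le_one (hγ0 : ∀ k, 0 < γ k) (hγ1 : ∀ k, γ k < 1) (hγ : StrictMono γ) (k : ℕ) :
    knot K γ k ≤ 1 :=
  knot_of_lt (γ := γ) (j := k + K + 1) (by omega) ▸ knot_monotone hγ0 hγ1 hγ (by omega)

end Knots

section CubeRatio

noncomputable def cubeRatio (x t : ℝ) : ℝ := max (x - t) 0 ^ 3 / (1 - t) ^ 2

variable {x : ℝ}

lemma cubeRatio_nonneg (t : ℝ) : 0 ≤ cubeRatio x t := by
  unfold cubeRatio; positivity

lemma cubeRatio_zero (hx : 0 ≤ x) : cubeRatio x 0 = x ^ 3 := by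
  simp [cubeRatio, hx]

@[simp] lemma cubeRatio_one : cubeRatio x 1 = 0 := by
  simp [cubeRatio]

lemma tangent_le_cubeRatio (hx : x ≤ 1) {t μ : ℝ} (ht : t ≤ 1) (hμ : 0 ≤ μ) :
    3 * μ ^ 2 * (x - t) - 2 * μ ^ 3 * (1 - t) ≤ cubeRatio x t := by
  rcases le_or_gt x t with hxt | htx
  · have : 0 ≤ μ ^ 2 * (t - x) := mul_nonneg (sq_nonneg μ) (by linarith)
    have : 0 ≤ μ ^ 3 * (1 - t) := mul_nonneg (pow_nonneg hμ 3) (by linarith)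
    linarith [cubeRatio_nonneg (x := x) t]
  · have hr : 0 < 1 - t := by linarith
    rw [cubeRatio, max_eq_left (by linarith), le_div_iff₀ (by positivity)]
    -- `s³ - (3μ²s - 2μ³r) r² = (s - μr)² (s + 2μr)` with `s = x - t`, `r = 1 - t`
    nlinarith [mul_nonneg (sq_nonneg (x - t - μ * (1 - t)))
      (by positivity : 0 ≤ x - t + 2 * μ * (1 - t))]

lemma exists_tangent_eq_cubeRatio {t : ℝ} (ht : t ≤ 1) :
    ∃ μ ≥ 0, cubeRatio x t = 3 * μ ^ 2 * (x - t) - 2 * μ ^ 3 * (1 - t) := by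
  refine ⟨max (x - t) 0 / (1 - t), div_nonneg (le_max_right _ _) (by linarith), ?_⟩
  rcases ht.lt_or_eq with ht | rfl
  · rcases le_total x t with hxt | htx
    · simp [cubeRatio, max_eq_right (sub_nonpos.2 hxt)]
    · have : 1 - t ≠ 0 := by linarith
      rw [cubeRatio, max_eq_left (by linarith)]
      field_simp
      ring
  · simp

lemma convexOn_cubeRatio (hx : x ≤ 1) : ConvexOn ℝ (Iic 1) (cubeRatio x) := by
  refine ⟨convex_Iic 1, fun p hp q hq a b ha hb hab => ?_⟩
  obtain ⟨μ, hμ, heq⟩ := exists_tangent_eq_cubeRatio (x := x) ((convex_Iic 1) hp hq ha hb hab)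
  have hp' := tangent_le_cubeRatio hx hp hμ
  have hq' := tangent_le_cubeRatio hx hq hμ
  simp only [smul_eq_mul] at heq ⊢
  calc cubeRatio x (a * p + b * q)
      = a * (3 * μ ^ 2 * (x - p) - 2 * μ ^ 3 * (1 - p))
        + b * (3 * μ ^ 2 * (x - q) - 2 * μ ^ 3 * (1 - q)) := by
        rw [heq]; linear_combination (2 * μ ^ 3 - 3 * μ ^ 2 * x) * hab
    _ ≤ a * cubeRatio x p + b * cubeRatio x q := by gcongr

end CubeRatio

lemma sum_range_succ_sub_mul (D φ : ℕ → ℝ) (n : ℕ) :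
    ∑ k ∈ range (n + 1), (D (k + 1) - D k) * φ k
      = D (n + 1) * φ n - D 0 * φ 0 - ∑ k ∈ range n, D (k + 1) * (φ (k + 1) - φ k) := by
  induction n with
  | zero => simp; ring
  | succ n ih => rw [sum_range_succ, ih, sum_range_succ]; ring

section KnotSlope

variable {K : ℕ} {γ : Fin K → ℝ} {x : ℝ}

noncomputable def knotSlope (K : ℕ) (γ : Fin K → ℝ) (x : ℝ) : ℕ → ℝ
  | 0 => 2 * x ^ 3 - 3 * x ^ 2
  | k + 1 => slope (cubeRatio x) (knot K γ k) (knot K γ (k + 1))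

lemma knotSlope_of_lt {k : ℕ} (hk : K + 1 < k) : knotSlope K γ x k = 0 := by
  obtain ⟨k, rfl⟩ : ∃ j, k = j + 1 := ⟨k - 1, by omega⟩
  rw [knotSlope, knot_of_lt (by omega), knot_of_lt (by omega), slope_same]

lemma knotSlope_le_succ (hγ0 : ∀ k, 0 < γ k) (hγ1 : ∀ k, γ k < 1) (hγ : StrictMono γ)
    (hx0 : 0 ≤ x) (hx1 : x ≤ 1) {k : ℕ} (hk : k ≤ K + 1) :
    knotSlope K γ x k ≤ knotSlope K γ x (k + 1) := by
  have hle := knot_le_one hγ0 hγ1 hγ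
  rcases k with _ | k
  · -- `μ = x` gives the tangent line at `0`, of slope `2x³ - 3x²`
    have hpos : 0 < knot K γ 1 := knot_lt_knot_succ hγ0 hγ1 hγ K.zero_le
    have := tangent_le_cubeRatio hx1 (hle 1) hx0
    rw [knotSlope, knotSlope, slope_def_field, knot_zero, cubeRatio_zero hx0, sub_zero,
      le_div_iff₀ hpos]
    linarith
  rcases hk.lt_or_eq with hk | hk
  · have := (convexOn_cubeRatio hx1).slope_mono_adjacent (hle k) (hle (k + 2))
      (knot_lt_knot_succ hγ0 hγ1 hγ (by omega)) (knot_lt_knot_succ hγ0 hγ1 hγ (by omega))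
    simpa only [knotSlope, slope_def_field] using this
  · obtain rfl : K = k := by omega
    rw [knotSlope_of_lt (k := K + 1 + 1) (by omega), knotSlope, slope_def_field,
      knot_of_lt (j := K + 1) (by omega), cubeRatio_one]
    exact div_nonpos_of_nonpos_of_nonneg (by linarith [cubeRatio_nonneg (x := x) (knot K γ K)])
      (by linarith [hle K])

lemma sum_knotSlope_sub : ∑ k ∈ range (K + 2), (knotSlope K γ x (k + 1) - knotSlope K γ x k)
    = 3 * x ^ 2 - 2 * x ^ 3 := by
  rw [sum_range_sub, knotSlope_of_lt (by omega), knotSlope]; ring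

lemma sum_knotSlope_sub_mul_ramp (hγ0 : ∀ k, 0 < γ k) (hγ1 : ∀ k, γ k < 1) (hγ : StrictMono γ)
    {j : ℕ} (hj : j ≤ K + 1) :
    ∑ k ∈ range (K + 2), (knotSlope K γ x (k + 1) - knotSlope K γ x k)
      * max (knot K γ k - knot K γ j) 0 = cubeRatio x (knot K γ j) := by
  have hmono := knot_monotone hγ0 hγ1 hγ
  have ramp (k : ℕ) : max (knot K γ k - knot K γ j) 0 = knot K γ (max j k) - knot K γ j := by
    rw [hmono.map_max, ← max_sub_sub_right, sub_self, max_comm]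
  have step (k : ℕ) : knotSlope K γ x (k + 1) * (max (knot K γ (k + 1) - knot K γ j) 0
      - max (knot K γ k - knot K γ j) 0)
      = cubeRatio x (knot K γ (max j (k + 1))) - cubeRatio x (knot K γ (max j k)) := by
    rw [ramp, ramp, sub_sub_sub_cancel_right]
    rcases le_or_gt j k with hjk | hjk
    · rw [max_eq_right hjk, max_eq_right (by omega), mul_comm, knotSlope, ← smul_eq_mul,
        sub_smul_slope, vsub_eq_sub]
    · rw [max_eq_left hjk.le, max_eq_left hjk, sub_self, sub_self, mul_zero]
  rw [sum_range_succ_sub_mul, sum_congr rfl fun k _ => step k,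
    sum_range_sub (fun k => cubeRatio x (knot K γ (max j k))),
    knotSlope_of_lt (by omega), knot_zero, max_eq_right hj, max_eq_left j.zero_le,
    knot_of_lt (j := K + 1) (by omega)]
  simp [knot_nonneg hγ0 hγ1 hγ j]

lemma sum_knotSlope_sub_mul_affine (hγ0 : ∀ k, 0 < γ k) (hγ1 : ∀ k, γ k < 1)
    (hγ : StrictMono γ) (hx0 : 0 ≤ x) (α β : ℝ) :
    ∑ k ∈ range (K + 2), (knotSlope K γ x (k + 1) - knotSlope K γ x k) * (α + β * knot K γ k)
      = α * (3 * x ^ 2 - 2 * x ^ 3) + β * x ^ 3 := by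
  have ramp := sum_knotSlope_sub_mul_ramp (x := x) hγ0 hγ1 hγ (Nat.zero_le (K + 1))
  simp only [knot_zero, sub_zero, cubeRatio_zero hx0,
    fun k => max_eq_left (knot_nonneg hγ0 hγ1 hγ k)] at ramp
  simp only [mul_add, sum_add_distrib, mul_left_comm _ β, ← mul_sum, ← sum_mul]
  rw [sum_knotSlope_sub, ramp, mul_comm]

end KnotSlope

section Vertices

variable {K : ℕ} {γ : Fin K → ℝ}

noncomputable def knotVertex (K : ℕ) (γ : Fin K → ℝ) (t : ℝ) : Fin (K + 3) → ℝ := fun i =>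
  if h0 : i.val = 0 then (2 + t) / 3
  else if h1 : i.val = 1 then (1 + 2 * t) / 3
  else if h2 : i.val = 2 then t
  else
    let j : Fin K := ⟨i.val - 3, by omega⟩
    max (t - γ j) 0 * (1 - γ j) ^ 2

lemma pyrVert_zero : pyrVert K γ 0 = 0 := by
  funext i; simp [pyrVert]

lemma pyrVert_one : pyrVert K γ 1 = fun i => if i.val = 0 then 1 / 2 else 0 := by
  funext i; simp [pyrVert]

lemma pyrVert_succ_succ (hγ0 : ∀ k, 0 < γ k) (hγ1 : ∀ k, γ k < 1) (hγ : StrictMono γ)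
    (k : Fin (K + 2)) : pyrVert K γ k.succ.succ = knotVertex K γ (knot K γ k) := by
  funext i
  obtain ⟨k, hk⟩ := k
  simp only [pyrVert, knotVertex, Fin.succ_mk]
  rcases Nat.eq_zero_or_pos k with rfl | hk0
  · rw [dif_neg (by omega), dif_neg (by omega), dif_pos rfl, knot_zero]
    split_ifs <;> simp [(hγ0 _).le]
  rcases Nat.lt_or_ge k (K + 1) with hkK | hkK
  · obtain ⟨q, rfl⟩ : ∃ q, k = q + 1 := ⟨k - 1, by omega⟩
    rw [dif_neg (by omega), dif_neg (by omega), dif_neg (by omega), dif_neg (by omega),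
      knot_succ (γ := γ) ⟨q, by omega⟩]
    simp only [show q + 1 + 1 + 1 - 3 = q by omega]
    split_ifs with _ _ _ hlt <;> try rfl
    · rw [max_eq_left (sub_nonneg.2 (hγ (Fin.mk_lt_mk.2 hlt)).le)]
    · rw [max_eq_right (sub_nonpos.2 (hγ.monotone (Fin.mk_le_mk.2 (not_lt.1 hlt)))), zero_mul]
  · obtain rfl : k = K + 1 := by omega
    rw [dif_neg (by omega), dif_neg (by omega), dif_neg (by omega), dif_pos rfl,
      knot_of_lt (by omega)]
    split_ifs <;> first | omega | norm_num
    rw [max_eq_left (sub_nonneg.2 (hγ1 _).le)]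
    ring

lemma sum_knotSlope_sub_mul_knotVertex_of_three_le (hγ0 : ∀ k, 0 < γ k) (hγ1 : ∀ k, γ k < 1)
    (hγ : StrictMono γ) {x : ℝ} {i : ℕ} (hi : i < K + 3) (hi3 : 3 ≤ i) :
    ∑ k ∈ range (K + 2), (knotSlope K γ x (k + 1) - knotSlope K γ x k)
      * knotVertex K γ (knot K γ k) ⟨i, hi⟩ = pyrCurve K γ x ⟨i, hi⟩ := by
  simp only [knotVertex, pyrCurve, show i ≠ 0 by omega, show i ≠ 1 by omega,
    show i ≠ 2 by omega, ↓reduceDIte]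
  have h1 : 1 - γ ⟨i - 3, by omega⟩ ≠ 0 := (sub_pos.2 (hγ1 _)).ne'
  rw [← knot_succ (γ := γ) ⟨i - 3, by omega⟩] at h1 ⊢
  simp only [← mul_assoc, ← sum_mul]
  rw [sum_knotSlope_sub_mul_ramp hγ0 hγ1 hγ (by omega), cubeRatio]
  field_simp

end Vertices

section Weights

variable {K : ℕ} {γ : Fin K → ℝ} {x : ℝ}

noncomputable def pyrWeight (K : ℕ) (γ : Fin K → ℝ) (x : ℝ) : Fin (K + 4) → ℝ :=
  Fin.cons ((1 - x) ^ 2) <| Fin.cons (2 * x * (1 - x) ^ 2) fun k : Fin (K + 2) =>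
    knotSlope K γ x (k + 1) - knotSlope K γ x k

lemma pyrWeight_nonneg (hγ0 : ∀ k, 0 < γ k) (hγ1 : ∀ k, γ k < 1) (hγ : StrictMono γ)
    (hx0 : 0 ≤ x) (hx1 : x ≤ 1) (p : Fin (K + 4)) : 0 ≤ pyrWeight K γ x p := by
  cases p using Fin.cases with
  | zero => simp only [pyrWeight, Fin.cons_zero]; positivity
  | succ p =>
    cases p using Fin.cases with
    | zero =>
      simp only [pyrWeight, Fin.cons_zero, Fin.cons_succ]
      exact mul_nonneg (mul_nonneg zero_le_two hx0) (sq_nonneg _)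
    | succ k =>
      simp only [pyrWeight, Fin.cons_succ]
      exact sub_nonneg.2 (knotSlope_le_succ hγ0 hγ1 hγ hx0 hx1 (by omega))

lemma sum_pyrWeight : ∑ p, pyrWeight K γ x p = 1 := by
  rw [Fin.sum_univ_succ, Fin.sum_univ_succ]
  simp only [pyrWeight, Fin.cons_zero, Fin.cons_succ]
  rw [Fin.sum_univ_eq_sum_range (fun k => knotSlope K γ x (k + 1) - knotSlope K γ x k),
    sum_knotSlope_sub]
  ring

lemma sum_pyrWeight_smul_pyrVert (hγ0 : ∀ k, 0 < γ k) (hγ1 : ∀ k, γ k < 1) (hγ : StrictMono γ)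
    (hx0 : 0 ≤ x) :
    ∑ p, pyrWeight K γ x p • pyrVert K γ p = pyrCurve K γ x := by
  rw [Fin.sum_univ_succ, Fin.sum_univ_succ]
  simp only [pyrWeight, Fin.cons_zero, Fin.cons_succ, pyrVert_succ_succ hγ0 hγ1 hγ]
  rw [Fin.succ_zero_eq_one, pyrVert_zero, pyrVert_one, smul_zero, zero_add]
  funext i
  simp only [Pi.add_apply, Finset.sum_apply, Pi.smul_apply, smul_eq_mul]
  rw [Fin.sum_univ_eq_sum_range
    (fun k => (knotSlope K γ x (k + 1) - knotSlope K γ x k) * knotVertex K γ (knot K γ k) i)]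
  obtain ⟨i, hi⟩ := i
  have affine := sum_knotSlope_sub_mul_affine (x := x) hγ0 hγ1 hγ hx0
  rcases (by omega : i = 0 ∨ i = 1 ∨ i = 2 ∨ 3 ≤ i) with rfl | rfl | rfl | hi3
  · simp only [knotVertex, pyrCurve, ↓reduceDIte, ↓reduceIte]
    rw [sum_congr rfl fun k _ => by
      rw [show (2 + knot K γ k) / 3 = 2 / 3 + 1 / 3 * knot K γ k by ring], affine]
    ring
  · simp only [knotVertex, pyrCurve, ↓reduceDIte, ↓reduceIte, one_ne_zero]
    rw [sum_congr rfl fun k _ => by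
      rw [show (1 + 2 * knot K γ k) / 3 = 1 / 3 + 2 / 3 * knot K γ k by ring], affine]
    ring
  · simp only [knotVertex, pyrCurve, ↓reduceDIte, ↓reduceIte, OfNat.ofNat_ne_zero,
      OfNat.ofNat_ne_one]
    rw [sum_congr rfl fun k _ => by rw [show knot K γ k = 0 + 1 * knot K γ k by ring], affine]
    ring
  · rw [sum_knotSlope_sub_mul_knotVertex_of_three_le hγ0 hγ1 hγ hi hi3]
    simp [show i ≠ 0 by omega]

end Weights

/-- For every `x ∈ [0,1]`, the point `c(x)` lies in the convex hull of the
`K+4` points `v₁, …, v_{K+4}`. -/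
theorem curve_mem_convexHull_verts (K : ℕ) (γ : Fin K → ℝ)
    (hγ0 : ∀ k, 0 < γ k) (hγ1 : ∀ k, γ k < 1) (hγmono : StrictMono γ) :
    ∀ x ∈ Set.Icc (0 : ℝ) 1,
      pyrCurve K γ x ∈ convexHull ℝ (Set.range (pyrVert K γ)) := by
  rintro x ⟨hx0, hx1⟩
  rw [← sum_pyrWeight_smul_pyrVert hγ0 hγ1 hγmono hx0]
  exact (convex_convexHull ℝ _).sum_mem (fun p _ => pyrWeight_nonneg hγ0 hγ1 hγmono hx0 hx1 p)
    sum_pyrWeight fun p _ => subset_convexHull ℝ _ (mem_range_self p)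
end

section
/- For every x ∈ [0,1], the point (x, x², x³) lies in the convex hull of the four points (0,0,0), (1/2,0,0), (2/3,1/3,0), (1,1,1) in ℝ³. -/
/-!
The moment curve `x ↦ (x, x², x³)` is the cubic Bézier curve with control points `(0,0,0)`,
`(1/3,0,0)`, `(2/3,1/3,0)`, `(1,1,1)`: this is the case `n = 3` of the Bernstein expansion
`x^k = ∑ ν, C(ν, k) / C(n, k) · B_{n,ν}(x)`, `k = 1, …, n`. A Bézier curve on `[0,1]` stays in the
convex hull of its control points, because the Bernstein weights are nonnegative and sum to one.
Finally, every control point lies in the tetrahedron: `(1/3,0,0)` is on the segment from `(0,0,0)`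
to `(1/2,0,0)`.
-/

open Finset Polynomial

theorem bezier_mem_convexHull {E : Type*} [AddCommGroup E] [Module ℝ E] (n : ℕ) (p : ℕ → E)
    {x : ℝ} (hx : x ∈ Set.Icc (0 : ℝ) 1) :
    ∑ ν ∈ range (n + 1), (bernsteinPolynomial ℝ n ν).eval x • p ν ∈
      convexHull ℝ (p '' Set.Iic n) := by
  obtain ⟨hx0, hx1⟩ := hx
  have h1x : 0 ≤ 1 - x := sub_nonneg.mpr hx1
  refine (convex_convexHull ℝ _).sum_mem (fun ν _ => ?_) ?_ (fun ν hν => ?_)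
  · simp only [bernsteinPolynomial, eval_mul, eval_pow, eval_sub, eval_one, eval_X, eval_natCast]
    positivity
  · simpa [eval_finsetSum] using congrArg (eval x) (bernsteinPolynomial.sum ℝ n)
  · exact subset_convexHull ℝ _ ⟨ν, Set.mem_Iic.mpr (Nat.lt_succ_iff.mp (mem_range.mp hν)), rfl⟩

noncomputable def momentControlPoint (n ν : ℕ) : Fin n → ℝ :=
  fun k => (ν.choose (k + 1) : ℝ) / n.choose (k + 1)

theorem moment_curve_eq_bezier_three (x : ℝ) :
    (![x, x ^ 2, x ^ 3] : Fin 3 → ℝ) =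
      ∑ ν ∈ range 4, (bernsteinPolynomial ℝ 3 ν).eval x • momentControlPoint 3 ν := by
  funext k
  fin_cases k <;>
    simp [sum_range_succ, bernsteinPolynomial, momentControlPoint, Nat.choose] <;> ring

theorem momentControlPoint_three_mem_convexHull {ν : ℕ} (hν : ν ≤ 3) :
    momentControlPoint 3 ν ∈ convexHull ℝ
      ({![0, 0, 0], ![1 / 2, 0, 0], ![2 / 3, 1 / 3, 0], ![1, 1, 1]} : Set (Fin 3 → ℝ)) := by
  interval_cases ν
  · refine subset_convexHull ℝ _ (Or.inl ?_)
    funext k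
    fin_cases k <;> norm_num [momentControlPoint, Nat.choose]
  · refine segment_subset_convexHull (x := ![0, 0, 0]) (y := ![1 / 2, 0, 0]) (by simp) (by simp)
      ⟨1 / 3, 2 / 3, by norm_num, by norm_num, by norm_num, ?_⟩
    funext k
    fin_cases k <;> norm_num [momentControlPoint, Nat.choose]
  · refine subset_convexHull ℝ _ (Or.inr (Or.inr (Or.inl ?_)))
    funext k
    fin_cases k <;> norm_num [momentControlPoint, Nat.choose]
  · refine subset_convexHull ℝ _ (Or.inr (Or.inr (Or.inr ?_)))
    funext k
    fin_cases k <;> norm_num [momentControlPoint, Nat.choose]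

/-- For every `x ∈ [0,1]`, the point `(x, x², x³)` lies in the convex hull of the
four points `(0,0,0)`, `(1/2,0,0)`, `(2/3,1/3,0)`, `(1,1,1)` in `ℝ³`. -/
theorem moment_curve_mem_tetrahedron :
    ∀ x ∈ Set.Icc (0 : ℝ) 1,
      (![x, x ^ 2, x ^ 3] : Fin 3 → ℝ) ∈
        convexHull ℝ
          ({![0, 0, 0], ![1 / 2, 0, 0], ![2 / 3, 1 / 3, 0], ![1, 1, 1]} :
            Set (Fin 3 → ℝ)) := by
  intro x hx
  rw [moment_curve_eq_bezier_three]
  refine convexHull_min ?_ (convex_convexHull ℝ _) (bezier_mem_convexHull 3 _ hx)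
  rintro _ ⟨ν, hν, rfl⟩
  exact momentControlPoint_three_mem_convexHull hν
end

section
/- Let γ ∈ (0,1) and write z₊ = max(z,0). For every x ∈ [0,1], the point (x, x², x³, ((x−γ)₊)³) lies in the convex hull of the five points (0,0,0,0), (1/2,0,0,0), (2/3,1/3,0,0), ((2+γ)/3, (1+2γ)/3, γ, 0), (1,1,1,(1−γ)³) in ℝ⁴. -/
/-!
Write `q = (x - γ)₊ / (1 - γ)`. The curve point is the combination of the five vertices with
weights `(1 - x)²`, `2x(1 - x)²`, `w₂`, `(x³ - q³)/γ`, `q³`, obtained by solving the linear system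
coordinate by coordinate from the last one; the middle weight `w₂` is fixed by the second
coordinate. For any `q` these weights sum to `1` and reproduce `(x, x², x³, (q(1 - γ))³)`, so only
nonnegativity depends on the choice of `q`. It is clear except for `w₂`, which factors as
`x²(3γ - x - 2γx)/γ` for `x ≤ γ` and as `γ(1 - x)²(3x - γ - 2γx)/(1 - γ)²` for `x ≥ γ`.
-/

open Set

noncomputable def polytopeVertex (γ : ℝ) : Fin 5 → Fin 4 → ℝ :=
  ![![0, 0, 0, 0], ![1 / 2, 0, 0, 0], ![2 / 3, 1 / 3, 0, 0],
    ![(2 + γ) / 3, (1 + 2 * γ) / 3, γ, 0], ![1, 1, 1, (1 - γ) ^ 3]]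

noncomputable def polytopeWeight (γ x q : ℝ) : Fin 5 → ℝ :=
  ![(1 - x) ^ 2, 2 * x * (1 - x) ^ 2,
    3 * x ^ 2 - (1 + 2 * γ) * ((x ^ 3 - q ^ 3) / γ) - 3 * q ^ 3,
    (x ^ 3 - q ^ 3) / γ, q ^ 3]

lemma sum_polytopeWeight {γ : ℝ} (hγ : γ ≠ 0) (x q : ℝ) :
    ∑ i, polytopeWeight γ x q i = 1 := by
  simp only [polytopeWeight, Fin.sum_univ_five, Matrix.cons_val]
  field_simp
  ring

lemma sum_polytopeWeight_smul_polytopeVertex {γ : ℝ} (hγ : γ ≠ 0) (x q : ℝ) :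
    ∑ i, polytopeWeight γ x q i • polytopeVertex γ i = ![x, x ^ 2, x ^ 3, (q * (1 - γ)) ^ 3] := by
  ext j
  fin_cases j <;> simp [polytopeWeight, polytopeVertex, Fin.sum_univ_five] <;> field_simp <;> ring

lemma polytopeWeight_two_nonneg {γ x q : ℝ} (hγ : γ ∈ Ioo 0 1) (hx : x ∈ Icc 0 1)
    (hq : q * (1 - γ) = max (x - γ) 0) : 0 ≤ polytopeWeight γ x q 2 := by
  obtain ⟨hγ0, hγ1⟩ := hγ
  obtain ⟨hx0, hx1⟩ := hx
  simp only [polytopeWeight, Matrix.cons_val]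
  rcases le_total x γ with hxγ | hγx
  · have hq0 : q = 0 := by
      rw [max_eq_right (by linarith)] at hq
      exact (mul_eq_zero.1 hq).resolve_right (by linarith)
    have hw₂ : 3 * x ^ 2 - (1 + 2 * γ) * ((x ^ 3 - q ^ 3) / γ) - 3 * q ^ 3
        = x ^ 2 * (3 * γ - x - 2 * γ * x) / γ := by
      rw [hq0]; field_simp; ring
    rw [hw₂]
    have : 0 ≤ 3 * γ - x - 2 * γ * x := by nlinarith
    positivity
  · have hq' : q = (x - γ) / (1 - γ) := by
      rw [max_eq_left (by linarith)] at hq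
      rw [← hq]; field_simp [show 1 - γ ≠ 0 by linarith]
    have hw₂ : 3 * x ^ 2 - (1 + 2 * γ) * ((x ^ 3 - q ^ 3) / γ) - 3 * q ^ 3
        = γ * (1 - x) ^ 2 * (3 * x - γ - 2 * γ * x) / (1 - γ) ^ 2 := by
      rw [hq']; field_simp [show 1 - γ ≠ 0 by linarith]; ring
    rw [hw₂]
    have : 0 ≤ 3 * x - γ - 2 * γ * x := by nlinarith
    positivity

lemma polytopeWeight_nonneg {γ x q : ℝ} (hγ : γ ∈ Ioo 0 1) (hx : x ∈ Icc 0 1)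
    (hq : q * (1 - γ) = max (x - γ) 0) (i : Fin 5) : 0 ≤ polytopeWeight γ x q i := by
  have h1γ : 0 < 1 - γ := sub_pos.2 hγ.2
  have hq0 : 0 ≤ q := nonneg_of_mul_nonneg_left (hq ▸ le_max_right _ _) h1γ
  have hqx : q ≤ x := by
    refine le_of_mul_le_mul_right ?_ h1γ
    rw [hq]
    exact max_le (by nlinarith [mul_nonneg (sub_nonneg.2 hx.2) hγ.1.le]) (mul_nonneg hx.1 h1γ.le)
  fin_cases i
  · exact sq_nonneg _
  · show 0 ≤ 2 * x * (1 - x) ^ 2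
    have := hx.1
    positivity
  · exact polytopeWeight_two_nonneg hγ hx hq
  · have := pow_le_pow_left₀ hq0 hqx 3
    exact div_nonneg (by linarith) hγ.1.le
  · exact pow_nonneg hq0 3

/-- For `γ ∈ (0,1)` and every `x ∈ [0,1]`, the point `(x, x², x³, ((x−γ)₊)³)`
lies in the convex hull of the five points `(0,0,0,0)`, `(1/2,0,0,0)`,
`(2/3,1/3,0,0)`, `((2+γ)/3, (1+2γ)/3, γ, 0)`, `(1,1,1,(1−γ)³)` in `ℝ⁴`. -/
theorem truncated_cubic_curve_mem_polytope (γ : ℝ) (hγ : γ ∈ Set.Ioo (0 : ℝ) 1) :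
    ∀ x ∈ Set.Icc (0 : ℝ) 1,
      (![x, x ^ 2, x ^ 3, (max (x - γ) 0) ^ 3] : Fin 4 → ℝ) ∈
        convexHull ℝ
          ({![0, 0, 0, 0], ![1 / 2, 0, 0, 0], ![2 / 3, 1 / 3, 0, 0],
            ![(2 + γ) / 3, (1 + 2 * γ) / 3, γ, 0],
            ![1, 1, 1, (1 - γ) ^ 3]} : Set (Fin 4 → ℝ)) := by
  intro x hx
  have hγ0 : γ ≠ 0 := hγ.1.ne'
  obtain ⟨q, hq⟩ : ∃ q, q * (1 - γ) = max (x - γ) 0 :=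
    ⟨_, div_mul_cancel₀ _ (sub_ne_zero.2 hγ.2.ne')⟩
  refine mem_convexHull_of_exists_fintype (polytopeWeight γ x q) (polytopeVertex γ)
    (polytopeWeight_nonneg hγ hx hq) (sum_polytopeWeight hγ0 x q) (fun i => ?_) ?_
  · fin_cases i <;> simp [polytopeVertex]
  · rw [sum_polytopeWeight_smul_polytopeVertex hγ0, hq]
end
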